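/- arXiv:1903.12533 — 2 statements merged into one kernel-verified Lean document; each statement's English description precedes it below -/
import Mathlib

section
/- Let p ∈ [0,1/2] and let Λ be the qubit dephasing channel Λ(ρ) = (1−p)ρ + p·σ_z ρ σ_z, where σ_z = diag(1,−1). For any qubit states ρ_x indexed by x = (x₀,x₁) ∈ {0,1}² and any two-outcome qubit POVMs (C^z_0, C^z_1) for z ∈ {0,1}, the average success probability (1/8)·Σ_{x∈{0,1}²} Σ_{z∈{0,1}} tr(Λ(ρ_x) C^z_{x_z}) satisfies the bound (1/8)·Σ_{x,z} tr(Λ(ρ_x) C^z_{x_z}) ≤ 1/2 + (1/4)·√(1 + (1−2p)²). (In particular, at p = 0 this recovers the optimal 2→1 quantum random access code value 1/2 + 1/(2√2).) -/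
open Matrix
open scoped ComplexOrder

noncomputable section

abbrev Mat2 := Matrix (Fin 2) (Fin 2) ℂ

/-- A qubit state: a positive semidefinite 2×2 complex matrix with unit trace. -/
def IsQubitState (ρ : Mat2) : Prop := ρ.PosSemidef ∧ ρ.trace = 1

/-- A two-outcome qubit POVM: a pair of positive semidefinite matrices summing to the identity. -/
def IsPOVMPair (E₀ E₁ : Mat2) : Prop := E₀.PosSemidef ∧ E₁.PosSemidef ∧ E₀ + E₁ = 1

/-- The `z`-th bit of the pair `(x₀, x₁)`. -/
def sel (x₀ x₁ z : Fin 2) : Fin 2 := if z = 0 then x₀ else x₁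

/-- The Pauli `σ_z` matrix. -/
def sigmaZ : Mat2 := !![1, 0; 0, -1]

/-- The dephasing channel `Λ(ρ) = (1−p)ρ + p σ_z ρ σ_z`. -/
def dephase (p : ℝ) (ρ : Mat2) : Mat2 :=
  ((1 - p : ℝ) : ℂ) • ρ + ((p : ℝ) : ℂ) • (sigmaZ * ρ * sigmaZ)


/-! In the Pauli basis a qubit state is `½ + r·σ` with `‖r‖ ≤ ½`, the effect `C^z_0` is
`c + e_z·σ` with `‖e_z‖ ≤ ½` (and `C^z_1 = 1 - c - e_z·σ`), and dephasing acts on `r` as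
`Q = diag(q, q, 1)` with `q = 1 - 2p`. The success probability becomes
`½ + ¼ Σ_z ⟪Q V_z, e_z⟫ ≤ ½ + ⅛ Σ_z ‖Q V_z‖`, where `V_z = Σ_x (-1)^{x_z} r_x`.
Pick unit vectors `g_z` with `‖Q V_z‖ = ⟪Q V_z, g_z⟫` and move the symmetric `Q` onto them:
each `r_x` is paired with `± Q (g₀ ± g₁)`, so `Σ_z ‖Q V_z‖ ≤ ‖Q (g₀ + g₁)‖ + ‖Q (g₀ - g₁)‖`.
As `g₀ + g₁ ⊥ g₀ - g₁` with `‖g₀ + g₁‖² + ‖g₀ - g₁‖² = 4`, and the two largest eigenvalues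
of `Q²` are `1` and `q²`, this is at most `2 √(1 + q²)`. -/

open scoped InnerProductSpace

local notation "ℝ³" => EuclideanSpace ℝ (Fin 3)

lemma inner_eq_fin_three (u v : ℝ³) : ⟪u, v⟫_ℝ = u 0 * v 0 + u 1 * v 1 + u 2 * v 2 := by
  simp only [PiLp.inner_apply, RCLike.inner_apply, Real.ringHom_apply, Fin.sum_univ_three]
  ring

lemma norm_sq_eq_fin_three (u : ℝ³) : ‖u‖ ^ 2 = u 0 ^ 2 + u 1 ^ 2 + u 2 ^ 2 := by
  simp only [EuclideanSpace.real_norm_sq_eq, Fin.sum_univ_three]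

lemma sqrt_add_sqrt_le_sqrt {x y r : ℝ} (hx : 0 ≤ x) (hy : 0 ≤ y) (hr : x + y ≤ r)
    (hxy : 4 * x * y ≤ (r - x - y) ^ 2) : √x + √y ≤ √r := by
  have hprod : 2 * (√x * √y) ≤ r - x - y := by
    have := Real.sqrt_le_sqrt hxy
    rw [Real.sqrt_sq (by linarith), show 4 * x * y = 2 ^ 2 * (x * y) by ring,
      Real.sqrt_mul (by norm_num), Real.sqrt_sq (by norm_num), Real.sqrt_mul hx] at this
    exact this
  apply Real.le_sqrt_of_sq_le
  nlinarith [Real.sq_sqrt hx, Real.sq_sqrt hy]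

lemma exists_norm_eq_one_inner_eq_norm {E : Type*} [NormedAddCommGroup E] [InnerProductSpace ℝ E]
    [Nontrivial E] (v : E) : ∃ g : E, ‖g‖ = 1 ∧ ⟪v, g⟫_ℝ = ‖v‖ := by
  rcases eq_or_ne v 0 with rfl | hv
  · obtain ⟨g, hg⟩ := exists_norm_eq E zero_le_one
    exact ⟨g, hg, by simp⟩
  · refine ⟨‖v‖⁻¹ • v, norm_smul_inv_norm hv, ?_⟩
    rw [real_inner_smul_right, real_inner_self_eq_norm_sq]
    field_simp

def dephaseBloch (q : ℝ) : ℝ³ →ₗ[ℝ] ℝ³ where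
  toFun v := !₂[q * v 0, q * v 1, v 2]
  map_add' u v := by ext i; fin_cases i <;> simp [mul_add]
  map_smul' c v := by ext i; fin_cases i <;> simp [mul_left_comm]

lemma dephaseBloch_apply (q : ℝ) (v : ℝ³) : dephaseBloch q v = !₂[q * v 0, q * v 1, v 2] := rfl

lemma isSymmetric_dephaseBloch (q : ℝ) : (dephaseBloch q).IsSymmetric := by
  intro u v
  simp only [inner_eq_fin_three, dephaseBloch_apply, cons_val_zero, cons_val_one, cons_val]
  ring

lemma norm_dephaseBloch_sq (q : ℝ) (v : ℝ³) :
    ‖dephaseBloch q v‖ ^ 2 = q ^ 2 * (v 0 ^ 2 + v 1 ^ 2) + v 2 ^ 2 := by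
  simp only [norm_sq_eq_fin_three, dephaseBloch_apply, cons_val_zero, cons_val_one, cons_val]
  ring

/-- Ky Fan's inequality for two orthogonal vectors: `1 + q ^ 2` is the sum of the two largest
eigenvalues of the square of `dephaseBloch q`. -/
lemma norm_dephaseBloch_add_norm_dephaseBloch_le {q : ℝ} (hq : q ^ 2 ≤ 1) {s d : ℝ³}
    (hsd : ⟪s, d⟫_ℝ = 0) :
    ‖dephaseBloch q s‖ + ‖dephaseBloch q d‖ ≤ √((1 + q ^ 2) * (‖s‖ ^ 2 + ‖d‖ ^ 2)) := by
  rw [← Real.sqrt_sq (norm_nonneg (dephaseBloch q s)),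
    ← Real.sqrt_sq (norm_nonneg (dephaseBloch q d)), norm_dephaseBloch_sq, norm_dephaseBloch_sq,
    norm_sq_eq_fin_three, norm_sq_eq_fin_three]
  rw [inner_eq_fin_three] at hsd
  have hbessel : (s 2 * d 2) ^ 2 ≤ (s 0 ^ 2 + s 1 ^ 2) * (d 0 ^ 2 + d 1 ^ 2) := by
    rw [show s 2 * d 2 = -(s 0 * d 0 + s 1 * d 1) by linarith]
    nlinarith [sq_nonneg (s 0 * d 1 - s 1 * d 0)]
  apply sqrt_add_sqrt_le_sqrt (by positivity) (by positivity)
  · nlinarith [sq_nonneg (s 0), sq_nonneg (s 1), sq_nonneg (d 0), sq_nonneg (d 1)]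
  -- With `a = s₂²`, `A = s₀² + s₁²` (similarly `b`, `B`) and `t = q²` the gap is
  -- `((A - B) + t (a - b))² + 4 (1 - t²) (A B - a b)`.
  · have hq4 : 0 ≤ 1 - (q ^ 2) ^ 2 := by nlinarith [sq_nonneg q]
    nlinarith [sq_nonneg (s 0 ^ 2 + s 1 ^ 2 - d 0 ^ 2 - d 1 ^ 2 + q ^ 2 * (s 2 ^ 2 - d 2 ^ 2)),
      mul_nonneg hq4 (sub_nonneg.mpr hbessel)]

lemma norm_dephaseBloch_add_norm_dephaseBloch_le_of_norm_le {q c : ℝ} (hq : q ^ 2 ≤ 1)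
    (r : Fin 2 → Fin 2 → ℝ³) (hr : ∀ i j, ‖r i j‖ ≤ c) :
    ‖dephaseBloch q (r 0 0 + r 0 1 - r 1 0 - r 1 1)‖
      + ‖dephaseBloch q (r 0 0 - r 0 1 + r 1 0 - r 1 1)‖ ≤ 4 * c * √(1 + q ^ 2) := by
  have hc : 0 ≤ c := (norm_nonneg _).trans (hr 0 0)
  obtain ⟨g₀, hg₀, hQg₀⟩ :=
    exists_norm_eq_one_inner_eq_norm (dephaseBloch q (r 0 0 + r 0 1 - r 1 0 - r 1 1))
  obtain ⟨g₁, hg₁, hQg₁⟩ :=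
    exists_norm_eq_one_inner_eq_norm (dephaseBloch q (r 0 0 - r 0 1 + r 1 0 - r 1 1))
  have hinner : ∀ i j w, ⟪r i j, w⟫_ℝ ≤ c * ‖w‖ := fun i j w =>
    (real_inner_le_norm _ _).trans (mul_le_mul_of_nonneg_right (hr i j) (norm_nonneg w))
  have hsum : ‖dephaseBloch q (g₀ + g₁)‖ + ‖dephaseBloch q (g₀ - g₁)‖ ≤ 2 * √(1 + q ^ 2) := by
    have horth : ⟪g₀ + g₁, g₀ - g₁⟫_ℝ = 0 := by
      rw [real_inner_add_sub_eq_zero_iff, hg₀, hg₁]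
    have hpar : ‖g₀ + g₁‖ ^ 2 + ‖g₀ - g₁‖ ^ 2 = 2 ^ 2 := by
      rw [norm_add_sq_real, norm_sub_sq_real, hg₀, hg₁]; ring
    have := norm_dephaseBloch_add_norm_dephaseBloch_le hq horth
    rwa [hpar, Real.sqrt_mul (by positivity), Real.sqrt_sq zero_le_two, mul_comm] at this
  have hcsum := mul_le_mul_of_nonneg_left hsum hc
  rw [← hQg₀, ← hQg₁, isSymmetric_dephaseBloch, isSymmetric_dephaseBloch]
  have h00 := hinner 0 0 (dephaseBloch q (g₀ + g₁))
  have h01 := hinner 0 1 (dephaseBloch q (g₀ - g₁))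
  have h10 := hinner 1 0 (-dephaseBloch q (g₀ - g₁))
  have h11 := hinner 1 1 (-dephaseBloch q (g₀ + g₁))
  simp only [map_add, map_sub, norm_neg, inner_add_left, inner_sub_left, inner_add_right,
    inner_sub_right, inner_neg_right] at h00 h01 h10 h11 hcsum ⊢
  linarith

lemma sum_inner_dephaseBloch_sel_le {q : ℝ} (hq : q ^ 2 ≤ 1) (r : Fin 2 → Fin 2 → ℝ³)
    (hr : ∀ i j, ‖r i j‖ ≤ 1 / 2) (e : Fin 2 → Fin 2 → ℝ³) (he : ∀ z, ‖e z 0‖ ≤ 1 / 2)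
    (he_neg : ∀ z, e z 1 = -e z 0) :
    ∑ x₀ : Fin 2, ∑ x₁ : Fin 2, ∑ z : Fin 2,
        ⟪dephaseBloch q (r x₀ x₁), e z (sel x₀ x₁ z)⟫_ℝ ≤ √(1 + q ^ 2) := by
  have hsum : ∑ x₀ : Fin 2, ∑ x₁ : Fin 2, ∑ z : Fin 2,
        ⟪dephaseBloch q (r x₀ x₁), e z (sel x₀ x₁ z)⟫_ℝ
      = ⟪dephaseBloch q (r 0 0 + r 0 1 - r 1 0 - r 1 1), e 0 0⟫_ℝ
        + ⟪dephaseBloch q (r 0 0 - r 0 1 + r 1 0 - r 1 1), e 1 0⟫_ℝ := by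
    simp only [Fin.sum_univ_two, sel, ↓reduceIte, one_ne_zero, he_neg, inner_neg_right, map_add,
      map_sub, inner_add_left, inner_sub_left]
    ring
  have hbound := norm_dephaseBloch_add_norm_dephaseBloch_le_of_norm_le hq r hr
  rw [hsum]
  calc _ ≤ ‖dephaseBloch q (r 0 0 + r 0 1 - r 1 0 - r 1 1)‖ * ‖e 0 0‖
        + ‖dephaseBloch q (r 0 0 - r 0 1 + r 1 0 - r 1 1)‖ * ‖e 1 0‖ :=
        add_le_add (real_inner_le_norm _ _) (real_inner_le_norm _ _)
    _ ≤ ‖dephaseBloch q (r 0 0 + r 0 1 - r 1 0 - r 1 1)‖ * (1 / 2)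
        + ‖dephaseBloch q (r 0 0 - r 0 1 + r 1 0 - r 1 1)‖ * (1 / 2) := by
        gcongr <;> exact he _
    _ ≤ √(1 + q ^ 2) := by linarith

/-- Coordinates of `M` in the Pauli basis, without the factor `2` of the usual Bloch vector:
a Hermitian `M` equals `tr M / 2 • 1 + m₀ σ_x + m₁ σ_y + m₂ σ_z` with `m = blochVector M`. -/
def blochVector (M : Mat2) : ℝ³ :=
  !₂[(M 1 0).re, (M 1 0).im, ((M 0 0).re - (M 1 1).re) / 2]

lemma blochVector_add (M N : Mat2) : blochVector (M + N) = blochVector M + blochVector N := by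
  ext i; fin_cases i <;> simp [blochVector]; ring

lemma blochVector_one : blochVector 1 = 0 := by
  ext i; fin_cases i <;> simp [blochVector]

lemma sigmaZ_mul_mul_sigmaZ (M : Mat2) :
    sigmaZ * M * sigmaZ = !![M 0 0, -M 0 1; -M 1 0, M 1 1] := by
  ext i j
  fin_cases i <;> fin_cases j <;> simp [sigmaZ, mul_apply, Fin.sum_univ_two, vecMul, dotProduct]

lemma blochVector_dephase (p : ℝ) (M : Mat2) :
    blochVector (dephase p M) = dephaseBloch (1 - 2 * p) (blochVector M) := by
  ext i; fin_cases i <;> simp [blochVector, dephaseBloch, dephase, sigmaZ_mul_mul_sigmaZ] <;> ring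

lemma trace_dephase (p : ℝ) (M : Mat2) : (dephase p M).trace = M.trace := by
  simp only [dephase, sigmaZ_mul_mul_sigmaZ, trace_add, trace_smul, trace_fin_two, of_apply,
    cons_val', cons_val_zero, cons_val_fin_one, cons_val_one, smul_eq_mul, Complex.ofReal_sub,
    Complex.ofReal_one]
  ring

lemma isHermitian_sigmaZ : sigmaZ.IsHermitian := by
  ext i j; fin_cases i <;> fin_cases j <;> simp [sigmaZ]

lemma Matrix.IsHermitian.dephase {M : Mat2} (hM : M.IsHermitian) (p : ℝ) :
    (dephase p M).IsHermitian := by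
  have := isHermitian_mul_mul_conjTranspose sigmaZ hM
  rw [isHermitian_sigmaZ.eq] at this
  exact (hM.smul (by simp [IsSelfAdjoint])).add (this.smul (by simp [IsSelfAdjoint]))

lemma Matrix.IsHermitian.im_apply_self {M : Mat2} (hM : M.IsHermitian) (i : Fin 2) :
    (M i i).im = 0 := by
  have h := congrArg Complex.im (hM.apply i i)
  simp only [Complex.star_def, Complex.conj_im] at h
  linarith

lemma re_trace_mul_of_isHermitian {M N : Mat2} (hM : M.IsHermitian) (hN : N.IsHermitian) :
    (M * N).trace.re =
      M.trace.re * N.trace.re / 2 + 2 * ⟪blochVector M, blochVector N⟫_ℝ := by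
  simp only [inner_eq_fin_three, Matrix.trace_fin_two, Matrix.mul_apply, Fin.sum_univ_two]
  rw [← hM.apply 0 1, ← hN.apply 0 1]
  simp [blochVector, hM.im_apply_self, hN.im_apply_self]
  ring

lemma norm_blochVector_le_of_posSemidef {M : Mat2} (hM : M.PosSemidef) :
    ‖blochVector M‖ ≤ M.trace.re / 2 := by
  have h00 := (Complex.nonneg_iff.mp (hM.diag_nonneg (i := 0))).1
  have h11 := (Complex.nonneg_iff.mp (hM.diag_nonneg (i := 1))).1
  have hdet := (Complex.nonneg_iff.mp hM.det_nonneg).1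
  rw [det_fin_two, ← hM.1.apply 0 1] at hdet
  simp only [RCLike.star_def, Complex.sub_re, Complex.mul_re, hM.1.im_apply_self, mul_zero,
    sub_zero, Complex.conj_re, Complex.conj_im, neg_mul, sub_neg_eq_add, sub_nonneg] at hdet
  rw [← sq_le_sq₀ (norm_nonneg _) (by rw [trace_fin_two, Complex.add_re]; linarith),
    norm_sq_eq_fin_three, trace_fin_two]
  simp only [blochVector, cons_val_zero, cons_val_one, cons_val, Complex.add_re]
  nlinarith

lemma blochVector_eq_neg_of_add_eq_one {E F : Mat2} (h : E + F = 1) :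
    blochVector F = -blochVector E := by
  have := congrArg blochVector h
  rw [blochVector_add, blochVector_one] at this
  exact eq_neg_of_add_eq_zero_right this

lemma IsPOVMPair.norm_blochVector_le {E F : Mat2} (h : IsPOVMPair E F) :
    ‖blochVector E‖ ≤ 1 / 2 := by
  obtain ⟨hE, hF, hEF⟩ := h
  have htr : E.trace.re + F.trace.re = 2 := by
    simpa [trace_add] using congrArg (fun M => M.trace.re) hEF
  have hFbound := norm_blochVector_le_of_posSemidef hF
  rw [blochVector_eq_neg_of_add_eq_one hEF, norm_neg] at hFbound
  linarith [norm_blochVector_le_of_posSemidef hE]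

lemma IsQubitState.norm_blochVector_le {ρ : Mat2} (h : IsQubitState ρ) :
    ‖blochVector ρ‖ ≤ 1 / 2 := by
  simpa [h.2] using norm_blochVector_le_of_posSemidef h.1

lemma IsQubitState.re_trace_dephase_mul {ρ E : Mat2} (hρ : IsQubitState ρ) (hE : E.IsHermitian)
    (p : ℝ) : ((dephase p ρ * E).trace).re =
      E.trace.re / 2 + 2 * ⟪dephaseBloch (1 - 2 * p) (blochVector ρ), blochVector E⟫_ℝ := by
  rw [re_trace_mul_of_isHermitian (hρ.1.1.dephase p) hE, trace_dephase, hρ.2, blochVector_dephase]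
  simp

lemma sum_re_trace_sel {C : Fin 2 → Fin 2 → Mat2} (hC : ∀ z, C z 0 + C z 1 = 1) :
    ∑ x₀ : Fin 2, ∑ x₁ : Fin 2, ∑ z : Fin 2, (C z (sel x₀ x₁ z)).trace.re / 2 = 4 := by
  have htr : ∀ z, (C z 0).trace.re + (C z 1).trace.re = 2 := fun z => by
    simpa [trace_add] using congrArg (fun M => M.trace.re) (hC z)
  simp only [Fin.sum_univ_two, sel, ↓reduceIte, one_ne_zero]
  linarith [htr 0, htr 1]

/-- Bound on the success probability of the 2→1 quantum random access code when a
dephasing channel with parameter `p` is applied to Alice's states (Appendix D). -/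
theorem dephased_qrac_bound
    (p : ℝ) (hp : p ∈ Set.Icc (0 : ℝ) (1 / 2))
    (ρ : Fin 2 → Fin 2 → Mat2) (hρ : ∀ x₀ x₁, IsQubitState (ρ x₀ x₁))
    (C : Fin 2 → Fin 2 → Mat2) (hC : ∀ z, IsPOVMPair (C z 0) (C z 1)) :
    1 / 8 * ∑ x₀ : Fin 2, ∑ x₁ : Fin 2, ∑ z : Fin 2,
        ((dephase p (ρ x₀ x₁) * C z (sel x₀ x₁ z)).trace).re
    ≤ 1 / 2 + Real.sqrt (1 + (1 - 2 * p) ^ 2) / 4 := by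
  obtain ⟨hp₀, hp₁⟩ := hp
  have hq : (1 - 2 * p) ^ 2 ≤ 1 := by nlinarith
  have hC_herm : ∀ z k, (C z k).IsHermitian := fun z k => by
    fin_cases k
    exacts [(hC z).1.1, (hC z).2.1.1]
  simp only [fun x₀ x₁ z => (hρ x₀ x₁).re_trace_dephase_mul (hC_herm z (sel x₀ x₁ z)) p,
    Finset.sum_add_distrib, ← Finset.mul_sum]
  rw [sum_re_trace_sel fun z => (hC z).2.2]
  have := sum_inner_dephaseBloch_sel_le hq (fun x₀ x₁ => blochVector (ρ x₀ x₁))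
    (fun x₀ x₁ => (hρ x₀ x₁).norm_blochVector_le) (fun z k => blochVector (C z k))
    (fun z => (hC z).norm_blochVector_le) (fun z => blochVector_eq_neg_of_add_eq_one (hC z).2.2)
  linarith
end
end

section
/- For every α ∈ [0,1] there exist qubit states ρ_x for x ∈ {0,1}², 2×2 unitary matrices U₀, U₁, and two-outcome qubit POVMs (C^z_0, C^z_1) for z ∈ {0,1} such that α/2 + ((1−α)/16)·Σ_{x,y,z} tr(U_y ρ_x U_y† C^z_{x_z}) = 1/2 + (1−α)/(2√2). (The bound for the unitary projective strategy is tight; it is attained by the optimal 2→1 quantum random access code states and measurements with U₀ = U₁ = I.) -/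
open Matrix
open scoped ComplexOrder

noncomputable section

namespace QRACaux

def sgn : Fin 2 → ℝ := fun b => if b = 0 then 1 else -1
def rr : ℝ := Real.sqrt 2⁻¹
def a1 : ℝ := Real.sqrt ((1 + rr)/2)
def a2 : ℝ := Real.sqrt ((1 - rr)/2)

lemma rr_nonneg : 0 ≤ rr := Real.sqrt_nonneg _
lemma rr_sq : rr^2 = 2⁻¹ := Real.sq_sqrt (by norm_num)
lemma rr_le_one : rr ≤ 1 := by
  rw [rr, show (1:ℝ) = Real.sqrt 1 from (Real.sqrt_one).symm]
  exact Real.sqrt_le_sqrt (by norm_num)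

lemma a1_sq : a1^2 = (1+rr)/2 := Real.sq_sqrt (by nlinarith [rr_nonneg])
lemma a2_sq : a2^2 = (1-rr)/2 := Real.sq_sqrt (by nlinarith [rr_le_one])
lemma a12 : a1 * a2 = rr/2 := by
  have h : a1 * a2 = Real.sqrt (((1+rr)/2) * ((1-rr)/2)) :=
    (Real.sqrt_mul (by nlinarith [rr_nonneg]) _).symm
  have h2 : ((1+rr)/2) * ((1-rr)/2) = (rr/2)^2 := by nlinarith [rr_sq]
  rw [h, h2, Real.sqrt_sq (by nlinarith [rr_nonneg])]

def outerR (v : Fin 2 → ℝ) : Mat2 :=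
  Matrix.of fun i j => ((v i * v j : ℝ) : ℂ)

lemma outerR_psd (v : Fin 2 → ℝ) : (outerR v).PosSemidef := by
  have h : outerR v =
      (Matrix.of fun i j => if i = (0:Fin 2) then ((v j : ℝ) : ℂ) else 0)ᴴ *
      (Matrix.of fun i j => if i = (0:Fin 2) then ((v j : ℝ) : ℂ) else 0) := by
    ext i j
    simp [outerR, Matrix.mul_apply, Fin.sum_univ_two, Matrix.conjTranspose_apply,
      Complex.ofReal_mul]
  rw [h]
  exact Matrix.posSemidef_conjTranspose_mul_self _

lemma outerR_trace (v : Fin 2 → ℝ) : (outerR v).trace = ((v 0 ^ 2 + v 1 ^ 2 : ℝ) : ℂ) := by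
  simp [outerR, Matrix.trace, Matrix.diag, Fin.sum_univ_two]; ring

lemma trace_mul_re (v w : Fin 2 → ℝ) :
    ((outerR v * outerR w).trace).re = (v 0 * w 0 + v 1 * w 1)^2 := by
  have : (outerR v * outerR w).trace = (((v 0 * w 0 + v 1 * w 1)^2 : ℝ) : ℂ) := by
    simp [outerR, Matrix.trace, Matrix.diag, Matrix.mul_apply, Fin.sum_univ_two]; ring
  rw [this, Complex.ofReal_re]

def vρ (x0 x1 : Fin 2) : Fin 2 → ℝ :=
  if x1 = 0 then ![a1, sgn x0 * a2] else ![a2, sgn x0 * a1]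

def vC (z b : Fin 2) : Fin 2 → ℝ :=
  if z = 0 then ![rr, sgn b * rr] else (if b = 0 then ![1, 0] else ![0, 1])

lemma vρ_norm (x0 x1 : Fin 2) : (vρ x0 x1 0)^2 + (vρ x0 x1 1)^2 = 1 := by
  fin_cases x0 <;> fin_cases x1 <;>
    simp [vρ, sgn] <;> nlinarith [a1_sq, a2_sq]

lemma povm_sum (z : Fin 2) : outerR (vC z 0) + outerR (vC z 1) = 1 := by
  fin_cases z <;>
    (ext i j; fin_cases i <;> fin_cases j <;>
      simp [vC, sgn, outerR, Matrix.one_apply] <;> norm_cast <;> nlinarith [rr_sq])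

lemma key (x0 x1 z : Fin 2) :
    (vρ x0 x1 0 * vC z (sel x0 x1 z) 0 + vρ x0 x1 1 * vC z (sel x0 x1 z) 1)^2
      = (1 + rr)/2 := by
  fin_cases x0 <;> fin_cases x1 <;> fin_cases z <;>
    (simp [vρ, vC, sel, sgn]; nlinarith [a1_sq, a2_sq, a12, rr_sq])

end QRACaux

open QRACaux in
/-- Tightness of the bound for the unitary projective strategy: for every `α ∈ [0,1]`
there exist states, unitaries and POVMs attaining the value `1/2 + (1−α)/(2√2)`. -/
theorem unitary_strategy_bound_tight (α : ℝ) (hα : α ∈ Set.Icc (0 : ℝ) 1) :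
    ∃ (ρ : Fin 2 → Fin 2 → Mat2) (U : Fin 2 → Mat2) (C : Fin 2 → Fin 2 → Mat2),
      (∀ x₀ x₁, IsQubitState (ρ x₀ x₁)) ∧
      (∀ y, U y ∈ Matrix.unitaryGroup (Fin 2) ℂ) ∧
      (∀ z, IsPOVMPair (C z 0) (C z 1)) ∧
      α / 2 + (1 - α) / 16 *
          ∑ x₀ : Fin 2, ∑ x₁ : Fin 2, ∑ y : Fin 2, ∑ z : Fin 2,
            ((U y * ρ x₀ x₁ * (U y)ᴴ * C z (sel x₀ x₁ z)).trace).re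
        = 1 / 2 + (1 - α) / (2 * Real.sqrt 2) := by
  refine ⟨fun x0 x1 => outerR (vρ x0 x1), fun _ => 1, fun z b => outerR (vC z b),
    fun x0 x1 => ⟨outerR_psd _, by rw [outerR_trace, vρ_norm]; norm_num⟩,
    fun y => one_mem _,
    fun z => ⟨outerR_psd _, outerR_psd _, povm_sum z⟩, ?_⟩
  have hterm : ∀ x0 x1 z : Fin 2,
      (((1 : Mat2) * outerR (vρ x0 x1) * (1 : Mat2)ᴴ * outerR (vC z (sel x0 x1 z))).trace).re
        = (1 + rr)/2 := by
    intro x0 x1 z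
    rw [Matrix.conjTranspose_one, Matrix.one_mul, Matrix.mul_one, trace_mul_re, key]
  simp only [hterm, Fin.sum_univ_two]
  have h2 : Real.sqrt 2 ≠ 0 := by positivity
  have h : rr = (Real.sqrt 2)⁻¹ := by rw [rr, Real.sqrt_inv]
  have key2 : (1 - α)/(2*Real.sqrt 2) = (1-α)*rr/2 := by
    rw [h]; field_simp
  rw [key2]; ring
end
end
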